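/- arXiv:1010.2604 — 3 statements merged into one kernel-verified Lean document; each statement's English description precedes it below -/
import Mathlib

section
/- For any pointed item e, L_p(•(e)) = L_p(e) ∪ L(|e|), where •(·) is the point-broadcasting function. -/
namespace PointedRE

inductive PItem (α : Type) : Type
  | empty : PItem α
  | eps : PItem α
  | ch : α → PItem α
  | pch : α → PItem α
  | plus : PItem α → PItem α → PItem α
  | cat : PItem α → PItem α → PItem α
  | star : PItem α → PItem α

namespace PItem

variable {α : Type}

/-- The carrier: erase all points. -/
def carrier : PItem α → RegularExpression α
  | empty => 0
  | eps => 1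
  | ch a => RegularExpression.char a
  | pch a => RegularExpression.char a
  | plus e1 e2 => carrier e1 + carrier e2
  | cat e1 e2 => carrier e1 * carrier e2
  | star e => (carrier e).star

/-- ε(b) : {ε} if b, ∅ otherwise. -/
def ebool (b : Bool) : Language α := if b then 1 else 0

/-- The pointed language of a pointed item. -/
def Lp : PItem α → Language α
  | empty => 0
  | eps => 0
  | ch _ => 0
  | pch a => {[a]}
  | plus e1 e2 => Lp e1 + Lp e2
  | cat e1 e2 => Lp e1 * (carrier e2).matches' + Lp e2
  | star e => Lp e * KStar.kstar (carrier e).matches'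

/-- A pointed regular expression (pre): a pointed item with a trailing boolean. -/
abbrev Pre (α : Type) := PItem α × Bool

/-- The pointed language of a pre. -/
def LpP (p : Pre α) : Language α := Lp p.1 + ebool p.2

/-- Broadcasting a point inside a pointed item. -/
def broadcast : PItem α → Pre α
  | empty => (empty, false)
  | eps => (eps, true)
  | ch a => (pch a, false)
  | pch a => (pch a, false)
  | plus e1 e2 =>
      (plus (broadcast e1).1 (broadcast e2).1, (broadcast e1).2 || (broadcast e2).2)
  | cat e1 e2 =>
      if (broadcast e1).2 then
        (cat (broadcast e1).1 (broadcast e2).1, (broadcast e2).2)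
      else (cat (broadcast e1).1 e2, false)
  | star e => (star (broadcast e).1, true)

/-- Lifted sum on pres. -/
def oplus (p1 p2 : Pre α) : Pre α := (plus p1.1 p2.1, p1.2 || p2.2)

/-- Lifted concatenation on pres. -/
def odot (p1 p2 : Pre α) : Pre α :=
  if p1.2 then (cat p1.1 (broadcast p2.1).1, p2.2 || (broadcast p2.1).2)
  else (cat p1.1 p2.1, p2.2)

/-- Lifted Kleene star on pres. -/
def ostar (p : Pre α) : Pre α :=
  if p.2 then (star (broadcast p.1).1, true) else (star p.1, false)

/-- Broadcasting extended to pres. -/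
def broadcastP (p : Pre α) : Pre α :=
  ((broadcast p.1).1, p.2 || (broadcast p.1).2)

/-- The move operation on pointed items. -/
def move [DecidableEq α] (a : α) : PItem α → Pre α
  | empty => (empty, false)
  | eps => (eps, false)
  | ch b => (ch b, false)
  | pch b => if b = a then (ch b, true) else (ch b, false)
  | plus e1 e2 => oplus (move a e1) (move a e2)
  | cat e1 e2 => odot (move a e1) (move a e2)
  | star e => ostar (move a e)

/-- The move operation iterated along a string (on pres, ignoring the trailing point). -/
def moves [DecidableEq α] : Pre α → List α → Pre α
  | p, [] => p
  | p, a :: w => moves (move a p.1) w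

/-- Embedding of regular expressions as point-free pointed items. -/
def embed : RegularExpression α → PItem α
  | .zero => empty
  | .epsilon => eps
  | .char a => ch a
  | .plus e1 e2 => plus (embed e1) (embed e2)
  | .comp e1 e2 => cat (embed e1) (embed e2)
  | .star e => star (embed e)

/-- Read-back of a pointed item as a set of regular expressions. -/
def R : PItem α → Set (RegularExpression α)
  | empty => ∅
  | eps => ∅
  | ch _ => ∅
  | pch a => {RegularExpression.char a}
  | plus e1 e2 => R e1 ∪ R e2
  | cat e1 e2 => (fun r => r * carrier e2) '' R e1 ∪ R e2
  | star e => (fun r => r * (carrier e).star) '' R e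

/-- Read-back of a pre. -/
def RP (p : Pre α) : Set (RegularExpression α) :=
  R p.1 ∪ (if p.2 then {1} else ∅)

/-- The language of a set of regular expressions. -/
def LS (S : Set (RegularExpression α)) : Language α :=
  {w | ∃ r ∈ S, w ∈ r.matches'}

/-- The look-ahead normal form of a regular expression (without ε). -/
def nf : RegularExpression α → Set (RegularExpression α)
  | .zero => ∅
  | .epsilon => ∅
  | .char a => {RegularExpression.char a}
  | .plus e1 e2 => nf e1 ∪ nf e2
  | .comp e1 e2 =>
      if e1.matchEpsilon then (fun r => r * e2) '' nf e1 ∪ nf e2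
      else (fun r => r * e2) '' nf e1
  | .star e => (fun r => r * e.star) '' nf e

/-- The look-ahead normal form with ε added when the expression is nullable. -/
def nfe (e : RegularExpression α) : Set (RegularExpression α) :=
  nf e ∪ (if e.matchEpsilon then {1} else ∅)

/-- nf_ε lifted to sets of regular expressions. -/
def nfeS (S : Set (RegularExpression α)) : Set (RegularExpression α) :=
  ⋃ r ∈ S, nfe r

/-- Merge of two pointed items (meaningful when they share the same carrier). -/
def merge : PItem α → PItem α → PItem α
  | ch a, pch _ => pch a
  | plus e1 e2, plus f1 f2 => plus (merge e1 f1) (merge e2 f2)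
  | cat e1 e2, cat f1 f2 => cat (merge e1 f1) (merge e2 f2)
  | star e, star f => star (merge e f)
  | e, _ => e

/-- Merge extended to pres. -/
def mergeP (p q : Pre α) : Pre α := (merge p.1 q.1, p.2 || q.2)

end PItem
end PointedRE

/-! Induction on the item. Only the star case is not a routine semiring computation: with
`•(e) = ⟨e', b⟩` and `L = L(|e|)` one needs `L* ⊆ L_p(e') L* ∪ {ε}`. The induction hypothesis
gives `L ⊆ L_p(e') ∪ {ε}`, so `L_p(e') L* ∪ {ε}` is closed under right multiplication by `L`,
and star induction in the Kleene algebra of languages concludes. -/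

open Computability

section KleeneAlgebra

variable {K : Type*} [KleeneAlgebra K]

theorem kstar_le_mul_kstar_add_one {a b : K} (h : b ≤ a + 1) : b∗ ≤ a * b∗ + 1 := by
  refine kstar_le_of_mul_le_left le_add_self ?_
  calc (a * b∗ + 1) * b ≤ a * b∗ + (a + 1) := by
        rw [add_mul, one_mul, mul_assoc]
        gcongr
        exact kstar_mul_le_kstar
    _ = a * b∗ + a + 1 := (add_assoc _ _ _).symm
    _ = a * b∗ + 1 := by
        rw [add_eq_left_iff_le.mpr (le_mul_of_one_le_right' one_le_kstar)]

theorem mul_kstar_add_one_eq {p q e l : K} (hq : q ≤ 1) (h : p + q = e + l) :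
    p * l∗ + 1 = e * l∗ + l∗ := by
  have hl : l ≤ p + 1 := calc
    l ≤ e + l := le_add_self
    _ = p + q := h.symm
    _ ≤ p + 1 := by gcongr
  have hp : p + 1 = e + l + 1 := by
    rw [← h, add_assoc, add_eq_right_iff_le.mpr hq]
  calc p * l∗ + 1 = p * l∗ + l∗ :=
        le_antisymm (by gcongr; exact one_le_kstar)
          (add_le le_self_add (kstar_le_mul_kstar_add_one hl))
    _ = (e + l + 1) * l∗ := by rw [← hp, add_mul, one_mul]
    _ = e * l∗ + l∗ := by
        rw [add_mul, add_mul, one_mul, add_assoc,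
          add_eq_right_iff_le.mpr mul_kstar_le_kstar]

end KleeneAlgebra

namespace PointedRE.PItem

variable {α : Type}

theorem carrier_broadcast (e : PItem α) : carrier (broadcast e).1 = carrier e := by
  induction e with
  | cat e1 e2 ih1 ih2 =>
      simp only [broadcast]
      split <;> simp [carrier, ih1, ih2]
  | _ => simp_all [broadcast, carrier]

theorem ebool_or (x y : Bool) : (ebool (x || y) : Language α) = ebool x + ebool y := by
  cases x <;> cases y <;> simp [ebool]

theorem ebool_le_one (b : Bool) : (ebool b : Language α) ≤ 1 := by
  cases b <;> simp [ebool]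

end PointedRE.PItem

open PointedRE PItem

/-- L_p(•(e)) = L_p(e) ∪ L(|e|). -/
theorem stmt2 {α : Type} (e : PItem α) :
    LpP (broadcast e) = Lp e + (carrier e).matches' := by
  induction e with
  | empty | eps | ch _ | pch _ => simp [LpP, broadcast, Lp, carrier, ebool]
  | plus e1 e2 ih1 ih2 =>
      simp only [LpP, broadcast, Lp, carrier, RegularExpression.matches'_add, ebool_or] at *
      rw [add_add_add_comm, ih1, ih2, add_add_add_comm]
  | cat e1 e2 ih1 ih2 =>
      rcases h1 : broadcast e1 with ⟨p1, _ | _⟩ <;>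
        simp only [broadcast, h1, LpP, Lp, carrier, ebool, carrier_broadcast,
          RegularExpression.matches'_mul, if_true, Bool.false_eq_true, if_false, add_zero]
          at ih1 ih2 ⊢
      · rw [ih1, add_mul, add_right_comm]
      · rw [add_assoc, ih2, add_comm (Lp e2), ← add_assoc, ← add_one_mul, ih1, add_mul,
          add_right_comm]
  | star e ih =>
      simp only [LpP, broadcast, Lp, carrier, RegularExpression.matches'_star,
        carrier_broadcast] at *
      exact mul_kstar_add_one_eq (ebool_le_one _) ih
end

section
/- For any pre e: L_p(e^⋆) = L_p(e)·L(|e|)*, where ⋆ is the lifted Kleene star on pres. -/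
/-! Broadcasting a point into `e` adds exactly the nonempty words of `L(|e|)` to its pointed
language: `L_p(•e) = L_p(e) + (L(|e|) - 1)`. So when the trailing point is set,
`L_p(e^⋆) = (L_p(e) + (L - 1))·L* + 1`, and `(L - 1)·L* + 1 = L*` because discarding `ε`
from `L` does not change `L*`. -/

open Computability

namespace Language

variable {α : Type*} {l m : Language α}

theorem add_sub_distrib (l m n : Language α) : l + m - n = (l - n) + (m - n) :=
  sup_sdiff

theorem nil_notMem_sub_one (l : Language α) : [] ∉ l - 1 := by
  simp [mem_sub]

theorem sub_one_eq_self (h : [] ∉ l) : l - 1 = l := by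
  ext x
  simp only [mem_sub, mem_one, and_iff_left_iff_imp]
  rintro hx rfl
  exact h hx

theorem mul_sub_one_of_nil_mem (h : [] ∈ l) : l * m - 1 = (l - 1) * m + (m - 1) := by
  ext x
  simp only [mem_sub, mem_add, mem_mul, mem_one]
  constructor
  · rintro ⟨⟨u, hu, v, hv, rfl⟩, hne⟩
    rcases eq_or_ne u [] with rfl | hu0
    · exact Or.inr ⟨hv, by simpa using hne⟩
    · exact Or.inl ⟨u, ⟨hu, hu0⟩, v, hv, rfl⟩
  · rintro (⟨u, ⟨hu, hu0⟩, v, hv, rfl⟩ | ⟨hx, hne⟩)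
    · exact ⟨⟨u, hu, v, hv, rfl⟩, by simp [hu0]⟩
    · exact ⟨⟨[], h, x, hx, rfl⟩, hne⟩

theorem mul_sub_one_of_nil_notMem (h : [] ∉ l) : l * m - 1 = (l - 1) * m := by
  rw [sub_one_eq_self h]
  ext x
  simp only [mem_sub, mem_mul, mem_one, and_iff_left_iff_imp]
  rintro ⟨u, hu, v, hv, rfl⟩ huv
  exact h ((List.append_eq_nil_iff.mp huv).1 ▸ hu)

theorem sub_one_kstar (l : Language α) : (l - 1)∗ = l∗ := by
  rw [kstar_def (l - 1), kstar_def_nonempty l]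
  rfl

theorem one_add_sub_one_mul_kstar (l : Language α) : 1 + (l - 1) * l∗ = l∗ := by
  have h := one_add_self_mul_kstar_eq_kstar (l - 1)
  rwa [sub_one_kstar] at h

theorem kstar_sub_one (l : Language α) : l∗ - 1 = (l - 1) * l∗ := by
  have hl := nil_notMem_sub_one l
  have h11 : (1 : Language α) - 1 = 0 := sdiff_self
  conv_lhs => rw [← one_add_sub_one_mul_kstar]
  rw [add_sub_distrib, mul_sub_one_of_nil_notMem hl, sub_one_eq_self hl,
    h11, zero_add]

end Language

namespace RegularExpression

theorem nil_mem_matches'_iff {α : Type*} (P : RegularExpression α) :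
    [] ∈ P.matches' ↔ P.matchEpsilon := by
  classical
  exact (rmatch_iff_matches' P []).symm

end RegularExpression

namespace PointedRE.PItem

variable {α : Type}

theorem broadcast_snd (e : PItem α) : (broadcast e).2 = (carrier e).matchEpsilon := by
  induction e with
  | cat e1 e2 ih1 ih2 =>
    by_cases h : (broadcast e1).2 <;>
      simp_all [broadcast, carrier, RegularExpression.matchEpsilon]
  | _ => simp_all [broadcast, carrier, RegularExpression.matchEpsilon]

theorem Lp_broadcast (e : PItem α) :
    Lp (broadcast e).1 = Lp e + ((carrier e).matches' - 1) := by
  induction e with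
  | plus e1 e2 ih1 ih2 =>
    simp only [broadcast, Lp, carrier, RegularExpression.matches'_add, ih1, ih2,
      Language.add_sub_distrib]
    ac_rfl
  | cat e1 e2 ih1 ih2 =>
    by_cases h : (carrier e1).matchEpsilon
    · have h1 : [] ∈ (carrier e1).matches' := (RegularExpression.nil_mem_matches'_iff _).2 h
      simp only [broadcast, broadcast_snd, h, ↓reduceIte, Lp, carrier,
        RegularExpression.matches'_mul, carrier_broadcast, ih1, ih2,
        Language.mul_sub_one_of_nil_mem h1, add_mul]
      ac_rfl
    · have h1 : [] ∉ (carrier e1).matches' := mt (RegularExpression.nil_mem_matches'_iff _).1 h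
      simp only [broadcast, broadcast_snd, h, Bool.false_eq_true, ↓reduceIte, Lp, carrier,
        RegularExpression.matches'_mul, ih1, Language.mul_sub_one_of_nil_notMem h1, add_mul]
      ac_rfl
  | star e ih =>
    simp only [broadcast, Lp, carrier, RegularExpression.matches'_star, carrier_broadcast, ih,
      Language.kstar_sub_one, add_mul]
  | ch a | pch a =>
    have ha : [] ∉ ({[a]} : Language α) := List.cons_ne_nil a [] ∘ Eq.symm
    simp [broadcast, Lp, carrier, Language.sub_one_eq_self ha]
  | _ => simp [broadcast, Lp, carrier]

end PointedRE.PItem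

open PointedRE PItem

/-- L_p(e^⋆) = L_p(e)·L(|e|)*. -/
theorem stmt5 {α : Type} (p : Pre α) :
    LpP (ostar p) = LpP p * KStar.kstar (carrier p.1).matches' := by
  obtain ⟨e, _ | _⟩ := p
  · simp [ostar, LpP, Lp, ebool]
  · simp only [ostar, LpP, Lp, ebool, if_true, carrier_broadcast, Lp_broadcast, add_mul, one_mul]
    rw [add_assoc, add_comm _ 1, Language.one_add_sub_one_mul_kstar]
end

section
/- For any pointed item e, L(R(e)) = L_p(e), where R is the read-back function associating to each pointed item a set of regular expressions. -/
namespace PointedRE.PItem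

variable {α : Type}

lemma mem_LS {S : Set (RegularExpression α)} {w : List α} :
    w ∈ LS S ↔ ∃ r ∈ S, w ∈ r.matches' :=
  Iff.rfl

@[simp]
lemma LS_empty : LS (∅ : Set (RegularExpression α)) = 0 := by
  ext w
  simp [mem_LS, Language.notMem_zero]

@[simp]
lemma LS_union (S T : Set (RegularExpression α)) : LS (S ∪ T) = LS S + LS T := by
  ext w
  simp only [mem_LS, Set.mem_union, Language.mem_add, or_and_right, exists_or]

@[simp]
lemma LS_singleton (r : RegularExpression α) : LS {r} = r.matches' := by
  ext w
  simp [mem_LS]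

@[simp]
lemma LS_image_mul_right (S : Set (RegularExpression α)) (f : RegularExpression α) :
    LS ((· * f) '' S) = LS S * f.matches' := by
  ext w
  simp only [mem_LS, Set.exists_mem_image, RegularExpression.matches'_mul, Language.mem_mul]
  grind

end PointedRE.PItem

open PointedRE PItem

/-- L(R(e)) = L_p(e). -/
theorem stmt13 {α : Type} (e : PItem α) :
    LS (R e) = Lp e := by
  induction e <;> simp_all [R, Lp]
end
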